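/- arXiv:2102.00387 — 9 statements merged into one kernel-verified Lean document; each statement's English description precedes it below -/
import Mathlib

section
/- Let (L, ·) be an algebra over a field of characteristic ≠ 2 which is both a left Leibniz algebra (u·(v·w) = (u·v)·w + v·(u·w)) and a right Leibniz algebra ((v·w)·u = (v·u)·w + v·(w·u)). Define [u,v] = (u·v − v·u)/2 and u∘v = (u·v + v·u)/2. Then: (a) (L, [ , ]) is a Lie algebra; (b) u∘v lies in the center of (L, [ , ]) for all u, v; (c) [u,v]∘w = 0 and (u∘v)∘w = 0 for all u, v, w. Conversely, if a bilinear product u·v = [u,v] + u∘v satisfies (a), (b), (c), then (L, ·) is a symmetric Leibniz algebra. -/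
/-!
Left and right Leibniz together are equivalent to four identities of the product: symmetric
products `u·v + v·u` annihilate `L` on both sides, every product anticommutes with every element,
and the cyclic sum of `(u·v)·w` vanishes. The first follows from the left Leibniz identity at
`u = v`, which gives `(u·u)·w = 0`, by polarization; the second likewise from the right one.
Conversely, once products anticommute both Leibniz identities reduce to the cyclic identity.

Writing `u·v = [u,v] + u∘v`, the conditions `[u∘v, w] = 0 = (u∘v)∘w` say exactly that `u∘v`
annihilates `L` on both sides, `[u,v]∘w = 0` then says that products anticommute, and under
these identities `[[u,v],w] = (u·v)·w`, so that Jacobi becomes the cyclic identity.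
-/

namespace LinearMap

section Leibniz

variable {R L : Type*} [CommRing R] [AddCommGroup L] [Module R L] (mul : L →ₗ[R] L →ₗ[R] L)

def IsLeftLeibniz : Prop :=
  ∀ u v w, mul u (mul v w) = mul (mul u v) w + mul v (mul u w)

def IsRightLeibniz : Prop :=
  ∀ u v w, mul (mul v w) u = mul (mul v u) w + mul v (mul w u)

variable {mul}

theorem IsLeftLeibniz.mul_mul_self_left (h : mul.IsLeftLeibniz) (u w : L) :
    mul (mul u u) w = 0 :=
  right_eq_add.mp (h u u w)

theorem IsRightLeibniz.mul_mul_self_right (h : mul.IsRightLeibniz) (u w : L) :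
    mul w (mul u u) = 0 :=
  left_eq_add.mp (h u w u)

theorem IsLeftLeibniz.mul_mul_add_mul_mul_left (h : mul.IsLeftLeibniz) (u v w : L) :
    mul (mul u v) w + mul (mul v u) w = 0 := by
  have halt : (mul.compr₂ (mul.flip w)).IsAlt := fun u => h.mul_mul_self_left u w
  exact add_eq_zero_iff_neg_eq.mpr (halt.neg u v)

theorem IsRightLeibniz.mul_mul_add_mul_mul_right (h : mul.IsRightLeibniz) (u v w : L) :
    mul w (mul u v) + mul w (mul v u) = 0 := by
  have halt : (mul.compr₂ (mul w)).IsAlt := fun u => h.mul_mul_self_right u w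
  exact add_eq_zero_iff_neg_eq.mpr (halt.neg u v)

def IsSymmLeibniz : Prop :=
  mul.IsLeftLeibniz ∧ mul.IsRightLeibniz

theorem IsSymmLeibniz.mul_mul_add_mul_mul_comm (h : mul.IsSymmLeibniz) (u v w : L) :
    mul (mul u v) w + mul w (mul u v) = 0 := by
  linear_combination (norm := module) h.1 w u v + h.2 w u v +
    h.1.mul_mul_add_mul_mul_left w u v + h.2.mul_mul_add_mul_mul_right w v u

theorem IsSymmLeibniz.mul_mul_cyclic (h : mul.IsSymmLeibniz) (u v w : L) :
    mul (mul u v) w + mul (mul v w) u + mul (mul w u) v = 0 := by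
  linear_combination (norm := module) -h.1 u v w + h.mul_mul_add_mul_mul_comm v w u -
    h.mul_mul_add_mul_mul_comm u w v + h.1.mul_mul_add_mul_mul_left u w v

theorem isSymmLeibniz_of_mul_mul_comm_of_cyclic
    (hsymm : ∀ u v w, mul (mul u v) w + mul (mul v u) w = 0)
    (hcomm : ∀ u v w, mul (mul u v) w + mul w (mul u v) = 0)
    (hcyc : ∀ u v w, mul (mul u v) w + mul (mul v w) u + mul (mul w u) v = 0) :
    mul.IsSymmLeibniz := by
  constructor <;> intro u v w
  · linear_combination (norm := module) hcomm v w u - hcomm u w v + hsymm u w v - hcyc u v w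
  · linear_combination (norm := module) hcyc u v w - hsymm v u w - hcomm w u v

theorem isSymmLeibniz_iff : mul.IsSymmLeibniz ↔
    (∀ u v w, mul (mul u v) w + mul (mul v u) w = 0) ∧
    (∀ u v w, mul w (mul u v) + mul w (mul v u) = 0) ∧
    (∀ u v w, mul (mul u v) w + mul w (mul u v) = 0) ∧
    (∀ u v w, mul (mul u v) w + mul (mul v w) u + mul (mul w u) v = 0) :=
  ⟨fun h => ⟨h.1.mul_mul_add_mul_mul_left, h.2.mul_mul_add_mul_mul_right,
      h.mul_mul_add_mul_mul_comm, h.mul_mul_cyclic⟩,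
    fun ⟨hsymm, _, hcomm, hcyc⟩ => isSymmLeibniz_of_mul_mul_comm_of_cyclic hsymm hcomm hcyc⟩

end Leibniz

section Parts

variable {K L : Type*} [Field K] [AddCommGroup L] [Module K L] (mul : L →ₗ[K] L →ₗ[K] L)

def antisymmPart : L →ₗ[K] L →ₗ[K] L :=
  (2 : K)⁻¹ • (mul - mul.flip)

def symmPart : L →ₗ[K] L →ₗ[K] L :=
  (2 : K)⁻¹ • (mul + mul.flip)

theorem antisymmPart_apply (u v : L) :
    mul.antisymmPart u v = (2 : K)⁻¹ • (mul u v - mul v u) :=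
  rfl

theorem symmPart_apply (u v : L) : mul.symmPart u v = (2 : K)⁻¹ • (mul u v + mul v u) :=
  rfl

variable {mul}

theorem antisymmPart_add_symmPart (h2 : (2 : K) ≠ 0) (u v : L) :
    mul.antisymmPart u v + mul.symmPart u v = mul u v := by
  rw [antisymmPart_apply, symmPart_apply]
  match_scalars <;> field_simp <;> ring

theorem symmPart_sub_antisymmPart (h2 : (2 : K) ≠ 0) (u v : L) :
    mul.symmPart u v - mul.antisymmPart u v = mul v u := by
  rw [antisymmPart_apply, symmPart_apply]
  match_scalars <;> field_simp <;> ring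

theorem mul_symmPart_left (u v w : L) :
    mul (mul.symmPart u v) w = (2 : K)⁻¹ • (mul (mul u v) w + mul (mul v u) w) := by
  simp only [symmPart_apply, map_smul, map_add, smul_apply, add_apply]

theorem mul_symmPart_right (u v w : L) :
    mul w (mul.symmPart u v) = (2 : K)⁻¹ • (mul w (mul u v) + mul w (mul v u)) := by
  simp only [symmPart_apply, map_smul, map_add]

theorem antisymmPart_eq_zero_and_symmPart_eq_zero_iff (h2 : (2 : K) ≠ 0) (x w : L) :
    mul.antisymmPart x w = 0 ∧ mul.symmPart x w = 0 ↔ mul x w = 0 ∧ mul w x = 0 := by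
  constructor
  · rintro ⟨ha, hs⟩
    rw [← antisymmPart_add_symmPart h2 x w, ← symmPart_sub_antisymmPart h2 x w, ha, hs]
    simp
  · rintro ⟨hxw, hwx⟩
    simp [antisymmPart_apply, symmPart_apply, hxw, hwx]

theorem symmPart_antisymmPart_left (h2 : (2 : K) ≠ 0) (u v w : L) :
    mul.symmPart (mul.antisymmPart u v) w =
      mul.symmPart (mul u v) w - mul.symmPart (mul.symmPart u v) w := by
  rw [eq_sub_of_add_eq (antisymmPart_add_symmPart h2 u v), map_sub, sub_apply]

theorem antisymmPart_antisymmPart_left (h2 : (2 : K) ≠ 0)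
    (hsymm : ∀ u v w, mul (mul u v) w + mul (mul v u) w = 0)
    (hcomm : ∀ u v w, mul (mul u v) w + mul w (mul u v) = 0) (u v w : L) :
    mul.antisymmPart (mul.antisymmPart u v) w = mul (mul u v) w := by
  simp only [antisymmPart_apply, map_smul, map_sub, smul_apply, sub_apply]
  linear_combination (norm := match_scalars <;> field_simp <;> ring)
    -(2 : K)⁻¹ • hsymm u v w - ((2 : K)⁻¹ * (2 : K)⁻¹) • (hcomm u v w - hcomm v u w)

theorem isSymmLeibniz_iff_antisymmPart_symmPart (h2 : (2 : K) ≠ 0) : mul.IsSymmLeibniz ↔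
    (∀ u v w, mul.antisymmPart (mul.antisymmPart u v) w + mul.antisymmPart (mul.antisymmPart v w) u +
      mul.antisymmPart (mul.antisymmPart w u) v = 0) ∧
    (∀ u v w, mul.antisymmPart (mul.symmPart u v) w = 0) ∧
    (∀ u v w, mul.symmPart (mul.antisymmPart u v) w = 0) ∧
    (∀ u v w, mul.symmPart (mul.symmPart u v) w = 0) := by
  have h2' : (2 : K)⁻¹ ≠ 0 := inv_ne_zero h2
  have hcentral_iff (u v w : L) :
      mul.antisymmPart (mul.symmPart u v) w = 0 ∧ mul.symmPart (mul.symmPart u v) w = 0 ↔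
        mul (mul u v) w + mul (mul v u) w = 0 ∧ mul w (mul u v) + mul w (mul v u) = 0 := by
    rw [antisymmPart_eq_zero_and_symmPart_eq_zero_iff h2, mul_symmPart_left, mul_symmPart_right,
      smul_eq_zero_iff_right h2', smul_eq_zero_iff_right h2']
  rw [isSymmLeibniz_iff]
  constructor
  · rintro ⟨hsymm_left, hsymm_right, hcomm, hcyc⟩
    have hcentral u v w := (hcentral_iff u v w).mpr ⟨hsymm_left u v w, hsymm_right u v w⟩
    refine ⟨fun u v w => ?_, fun u v w => (hcentral u v w).1, fun u v w => ?_,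
      fun u v w => (hcentral u v w).2⟩
    · simpa only [antisymmPart_antisymmPart_left h2 hsymm_left hcomm] using hcyc u v w
    · rw [symmPart_antisymmPart_left h2, (hcentral u v w).2, symmPart_apply, hcomm, smul_zero,
        sub_zero]
  · rintro ⟨hjacobi, hcentral, hcomm, hcentral'⟩
    have hsymm u v w := (hcentral_iff u v w).mp ⟨hcentral u v w, hcentral' u v w⟩
    have hcomm' (u v w : L) : mul (mul u v) w + mul w (mul u v) = 0 := by
      have h := hcomm u v w
      rwa [symmPart_antisymmPart_left h2, hcentral', sub_zero, symmPart_apply,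
        smul_eq_zero_iff_right h2'] at h
    refine ⟨fun u v w => (hsymm u v w).1, fun u v w => (hsymm u v w).2, hcomm', fun u v w => ?_⟩
    simpa only [antisymmPart_antisymmPart_left h2 (fun u v w => (hsymm u v w).1) hcomm']
      using hjacobi u v w

end Parts

end LinearMap

/-- Characterization of symmetric Leibniz algebras: a bilinear product on a vector space over
a field of characteristic ≠ 2 is both a left and a right Leibniz product if and only if its
antisymmetric part `[u,v] = (u·v - v·u)/2` satisfies the Jacobi identity, its symmetric part
`u∘v = (u·v + v·u)/2` takes values in the center of the bracket, and
`[u,v]∘w = 0` and `(u∘v)∘w = 0` for all `u,v,w`. -/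
theorem symmetric_leibniz_characterization {K : Type*} [Field K] (h2 : (2 : K) ≠ 0)
    {L : Type*} [AddCommGroup L] [Module K L]
    (mul : L →ₗ[K] L →ₗ[K] L) :
    let br : L → L → L := fun u v => ((2 : K)⁻¹) • (mul u v - mul v u)
    let ci : L → L → L := fun u v => ((2 : K)⁻¹) • (mul u v + mul v u)
    ((∀ u v w : L, mul u (mul v w) = mul (mul u v) w + mul v (mul u w)) ∧
      (∀ u v w : L, mul (mul v w) u = mul (mul v u) w + mul v (mul w u))) ↔
    ((∀ u v w : L, br (br u v) w + br (br v w) u + br (br w u) v = 0) ∧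
      (∀ u v w : L, br (ci u v) w = 0) ∧
      (∀ u v w : L, ci (br u v) w = 0) ∧
      (∀ u v w : L, ci (ci u v) w = 0)) := by
  intro br ci
  exact LinearMap.isSymmLeibniz_iff_antisymmPart_symmPart h2
end

section
/- Let L be a Lie algebra, Z(L) its center, and ω : L × L → Z(L) a symmetric bilinear map satisfying ω([u,v], w) = 0 and ω(ω(u,v), w) = 0 for all u, v, w ∈ L. Then the product u·v := [u,v] + ω(u,v) makes L a symmetric Leibniz algebra (both left and right Leibniz). -/
/-- Given a Lie algebra `L` and a symmetric bilinear map `ω` taking values in the center of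
`L` with `ω([u,v],w) = 0` and `ω(ω(u,v),w) = 0`, the product `u·v = [u,v] + ω(u,v)` makes `L`
a symmetric Leibniz algebra (both left and right Leibniz). -/
theorem symmetric_leibniz_from_omega {K L : Type*} [Field K] [LieRing L] [LieAlgebra K L]
    (ω : L →ₗ[K] L →ₗ[K] L)
    (hsymm : ∀ u v : L, ω u v = ω v u)
    (hcenter : ∀ u v w : L, ⁅(ω u v : L), w⁆ = 0)
    (h1 : ∀ u v w : L, ω ⁅u, v⁆ w = 0)
    (h2 : ∀ u v w : L, ω (ω u v) w = 0) :
    let mul : L → L → L := fun u v => ⁅u, v⁆ + ω u v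
    (∀ u v w : L, mul u (mul v w) = mul (mul u v) w + mul v (mul u w)) ∧
    (∀ u v w : L, mul (mul v w) u = mul (mul v u) w + mul v (mul w u)) := by
  intro mul
  have hcenter' : ∀ u v w : L, ⁅w, (ω u v : L)⁆ = 0 := by
    intro u v w
    rw [← lie_skew, hcenter, neg_zero]
  have h1' : ∀ u v w : L, ω w ⁅u, v⁆ = 0 := by
    intro u v w; rw [hsymm, h1]
  have h2' : ∀ u v w : L, ω w (ω u v) = 0 := by
    intro u v w; rw [hsymm, h2]
  constructor <;> intro u v w <;>
    simp only [mul] <;>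
    simp only [lie_add, add_lie, map_add, LinearMap.add_apply, hcenter, hcenter', h1, h1',
      h2, h2', add_zero, zero_add]
  · rw [leibniz_lie u v w]
  · rw [lie_lie, lie_lie, ← lie_skew u w, lie_neg, leibniz_lie w v u, ← lie_skew u ⁅v,w⁆, ← lie_skew v w, neg_lie]
    abel
end

section
/- Let L be a Lie algebra with center Z(L). If Z(L) = 0 or [L, L] = L, then the only symmetric bilinear map ω : L × L → Z(L) satisfying ω([u,v], w) = 0 = ω(ω(u,v), w) for all u, v, w is ω = 0; consequently, the only symmetric Leibniz structure on L with underlying Lie bracket [ , ] is the Lie algebra structure itself. -/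
/-- If a Lie algebra `L` has trivial center, or satisfies `[L,L] = L`, then the only
symmetric bilinear center-valued map `ω` with `ω([u,v],w) = ω(ω(u,v),w) = 0` is `ω = 0`;
consequently the only symmetric Leibniz product with underlying bracket `[ , ]` is the
bracket itself. -/
theorem omega_trivial_of_center_or_derived {K L : Type*} [Field K] [LieRing L]
    [LieAlgebra K L]
    (ω : L →ₗ[K] L →ₗ[K] L)
    (hsymm : ∀ u v : L, ω u v = ω v u)
    (hcenter : ∀ u v w : L, ⁅(ω u v : L), w⁆ = 0)
    (h1 : ∀ u v w : L, ω ⁅u, v⁆ w = 0)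
    (h2 : ∀ u v w : L, ω (ω u v) w = 0)
    (hL : (∀ z : L, (∀ u : L, ⁅z, u⁆ = 0) → z = 0) ∨
      Submodule.span K {x : L | ∃ u v : L, ⁅u, v⁆ = x} = ⊤) :
    ω = 0 ∧ ∀ u v : L, ⁅u, v⁆ + ω u v = ⁅u, v⁆ := by
  have hzero : ∀ u v : L, ω u v = 0 := by
    rcases hL with hc | hs
    · intro u v
      exact hc _ (hcenter u v)
    · intro u v
      have hu : u ∈ Submodule.span K {x : L | ∃ a b : L, ⁅a, b⁆ = x} := hs ▸ Submodule.mem_top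
      induction hu using Submodule.span_induction with
      | mem x hx => obtain ⟨a, b, rfl⟩ := hx; exact h1 a b v
      | zero => simp
      | add x y _ _ hx hy => rw [map_add, LinearMap.add_apply, hx, hy, add_zero]
      | smul c x _ hx => rw [map_smul, LinearMap.smul_apply, hx, smul_zero]
  constructor
  · ext u v; simp [hzero]
  · intro u v; rw [hzero, add_zero]
end

section
/- Let G be a group, A an abelian group, κ : G → A a group homomorphism, and β : A × A → Z(G) a symmetric bi-additive map with values in the center of G such that κ ∘ β = 0. Set χ(h,g) = β(κ(h), κ(g)) and define h ▷ g := g⁻¹ h g · χ(h,g). Then (G, ▷) is a pointed rack with distinguished element the identity 1: each right translation R_g is a bijection with inverse R_{g⁻¹}, the right self-distributivity (h₁ ▷ h₂) ▷ h₃ = (h₁ ▷ h₃) ▷ (h₂ ▷ h₃) holds, and h ▷ 1 = h, 1 ▷ h = 1. -/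
/-!
Because `κ ∘ β = 0`, the twist does not change `κ`: `κ (h ▷ g) = κ h`, hence
`χ (h ▷ g, g') = χ (h, g')`. Twists are central, so they pull out of conjugations, and a central
factor of the conjugating element drops out. Each rack identity thus reduces to the corresponding
identity for conjugation, up to products of twists that agree by commutativity of the center and
bi-additivity of `β` (for the inverse translation, `β (a, b) β (a, -b) = 1`).
-/

open Subgroup

section Center

variable {G : Type*} [Group G] {c : G}

theorem mul_mul_central_mul (hc : c ∈ center G) (a x b : G) :
    a * (x * c) * b = a * x * b * c := by
  rw [mul_assoc a, mul_assoc x, ← mem_center_iff.mp hc b]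
  group

theorem mul_central_inv_mul_mul_central (hc : c ∈ center G) (g x : G) :
    (g * c)⁻¹ * x * (g * c) = g⁻¹ * x * g := by
  calc (g * c)⁻¹ * x * (g * c) = c⁻¹ * (g⁻¹ * x * g) * c := by group
    _ = g⁻¹ * x * g := by rw [← mem_center_iff.mp (inv_mem hc), inv_mul_cancel_right]

end Center

section Additive

variable {G A : Type*} [Group G] [AddCommGroup A]

theorem map_one_of_map_mul {κ : G → A} (hκ : ∀ g h : G, κ (g * h) = κ g + κ h) :
    κ 1 = 0 := by
  simpa using hκ 1 1

theorem map_inv_of_map_mul {κ : G → A} (hκ : ∀ g h : G, κ (g * h) = κ g + κ h) (g : G) :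
    κ g⁻¹ = -κ g :=
  eq_neg_of_add_eq_zero_left (by rw [← hκ, inv_mul_cancel, map_one_of_map_mul hκ])

variable {β : A → A → G} (hsymm : ∀ a b : A, β a b = β b a)
  (hadd : ∀ a a' b : A, β (a + a') b = β a b * β a' b)
include hadd

theorem biadditive_zero_left (b : A) : β 0 b = 1 := by
  simpa using hadd 0 0 b

include hsymm

theorem biadditive_zero_right (a : A) : β a 0 = 1 :=
  (hsymm a 0).trans (biadditive_zero_left hadd a)

theorem biadditive_mul_neg_right (a b : A) : β a b * β a (-b) = 1 := by
  rw [hsymm a b, hsymm a (-b), ← hadd, add_neg_cancel, biadditive_zero_left hadd]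

end Additive

def twistedConj {G A : Type*} [Group G] (κ : G → A) (β : A → A → G) (h g : G) : G :=
  g⁻¹ * h * g * β (κ h) (κ g)

section TwistedConj

variable {G A : Type*} [Group G] [AddCommGroup A] {κ : G → A} {β : A → A → G}
  (hκ : ∀ g h : G, κ (g * h) = κ g + κ h)
  (hcenter : ∀ a b : A, β a b ∈ center G)
  (hsymm : ∀ a b : A, β a b = β b a)
  (hadd : ∀ a a' b : A, β (a + a') b = β a b * β a' b)
  (hker : ∀ a b : A, κ (β a b) = 0)

include hκ hker in
theorem map_twistedConj (h g : G) : κ (twistedConj κ β h g) = κ h := by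
  simp only [twistedConj, hκ, hker, map_inv_of_map_mul hκ]
  abel

include hκ hcenter hsymm hadd hker in
theorem twistedConj_twistedConj_inv (h g : G) :
    twistedConj κ β (twistedConj κ β h g) g⁻¹ = h := by
  rw [twistedConj, map_twistedConj hκ hker, map_inv_of_map_mul hκ, twistedConj,
    mul_mul_central_mul (hcenter _ _), mul_assoc,
    biadditive_mul_neg_right hsymm hadd]
  group

include hκ hcenter hker in
theorem twistedConj_self_distrib (h₁ h₂ h₃ : G) :
    twistedConj κ β (twistedConj κ β h₁ h₂) h₃ =
      twistedConj κ β (twistedConj κ β h₁ h₃) (twistedConj κ β h₂ h₃) := by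
  rw [twistedConj.eq_def κ β (twistedConj κ β h₁ h₂),
    twistedConj.eq_def κ β (twistedConj κ β h₁ h₃),
    map_twistedConj hκ hker, map_twistedConj hκ hker, map_twistedConj hκ hker]
  simp only [twistedConj]
  rw [mul_central_inv_mul_mul_central (hcenter _ _), mul_mul_central_mul (hcenter _ _),
    mul_mul_central_mul (hcenter _ _), mul_assoc _ (β (κ h₁) (κ h₂)),
    ← mem_center_iff.mp (hcenter _ _)]
  group

include hκ hsymm hadd in
theorem twistedConj_one_right (h : G) : twistedConj κ β h 1 = h := by
  rw [twistedConj, map_one_of_map_mul hκ, biadditive_zero_right hsymm hadd]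
  group

include hκ hadd in
theorem one_twistedConj (h : G) : twistedConj κ β 1 h = 1 := by
  rw [twistedConj, map_one_of_map_mul hκ, biadditive_zero_left hadd]
  group

end TwistedConj

/-- The operation `h ▷ g = g⁻¹ h g · χ(h,g)`, with `χ(h,g) = β(κ(h),κ(g))` built from a
homomorphism `κ : G → A` into an abelian group and a symmetric bi-additive center-valued `β`
with `κ ∘ β = 0`, makes `G` a pointed rack with distinguished element `1`. -/
theorem rack_structure_on_group {G A : Type*} [Group G] [AddCommGroup A]
    (κ : G → A) (hκ : ∀ g h : G, κ (g * h) = κ g + κ h)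
    (β : A → A → G)
    (hcenter : ∀ a b : A, ∀ g : G, β a b * g = g * β a b)
    (hsymm : ∀ a b : A, β a b = β b a)
    (hadd : ∀ a a' b : A, β (a + a') b = β a b * β a' b)
    (hker : ∀ a b : A, κ (β a b) = 0) :
    let χ : G → G → G := fun h g => β (κ h) (κ g)
    let op : G → G → G := fun h g => g⁻¹ * h * g * χ h g
    (∀ g : G, Function.Bijective (fun h => op h g)) ∧
    (∀ g h : G, op (op h g) g⁻¹ = h ∧ op (op h g⁻¹) g = h) ∧
    (∀ h₁ h₂ h₃ : G, op (op h₁ h₂) h₃ = op (op h₁ h₃) (op h₂ h₃)) ∧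
    (∀ h : G, op h 1 = h ∧ op 1 h = 1) := by
  intro χ op
  have central (a b : A) : β a b ∈ center G := mem_center_iff.mpr fun g => (hcenter a b g).symm
  have cancel (g h : G) : op (op h g) g⁻¹ = h :=
    twistedConj_twistedConj_inv hκ central hsymm hadd hker h g
  have cancel_inv (g h : G) : op (op h g⁻¹) g = h := by
    simpa using cancel g⁻¹ h
  refine ⟨fun g => ?_, fun g h => ⟨cancel g h, cancel_inv g h⟩,
    fun h₁ h₂ h₃ => twistedConj_self_distrib hκ central hker h₁ h₂ h₃,
    fun h => ⟨twistedConj_one_right hκ hsymm hadd h, one_twistedConj hκ hadd h⟩⟩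
  exact Function.bijective_iff_has_inverse.mpr ⟨fun h => op h g⁻¹, cancel g, cancel_inv g⟩
end

section
/- Let (G, ▷) be the rack on a group G defined by h ▷ g = g⁻¹ h g · χ(h,g), where χ(h,g) = β(κ(h),κ(g)) for a group homomorphism κ : G → A into an abelian group and a symmetric bi-additive β : A × A → Z(G) with κ ∘ β = 0. Let Q(G) = {g ∈ G : χ(g,g) = 1} be the set of idempotents. Then for all g, k ∈ Q(G), g ▷ (g ▷ k) = k⁻¹ g⁻¹ k g k⁻¹ g k; consequently the quandle Q(G) satisfies g ▷ (g ▷ k) = g for all g, k ∈ Q(G) if and only if g commutes with k⁻¹ g k for all g, k ∈ Q(G). -/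
/-- On the idempotent quandle `Q(G) = {g : χ(g,g) = 1}` of the rack
`h ▷ g = g⁻¹ h g · χ(h,g)`, one has `g ▷ (g ▷ k) = k⁻¹ g⁻¹ k g k⁻¹ g k`; consequently
`Q(G)` is quasi-trivial (`g ▷ (g ▷ k) = g`) if and only if every `g ∈ Q(G)` commutes with
`k⁻¹ g k` for all `k ∈ Q(G)`. -/
theorem quasi_trivial_characterization {G A : Type*} [Group G] [AddCommGroup A]
    (κ : G → A) (hκ : ∀ g h : G, κ (g * h) = κ g + κ h)
    (β : A → A → G)
    (hcenter : ∀ a b : A, ∀ g : G, β a b * g = g * β a b)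
    (hsymm : ∀ a b : A, β a b = β b a)
    (hadd : ∀ a a' b : A, β (a + a') b = β a b * β a' b)
    (hker : ∀ a b : A, κ (β a b) = 0) :
    let χ : G → G → G := fun h g => β (κ h) (κ g)
    let op : G → G → G := fun h g => g⁻¹ * h * g * χ h g
    let Q : Set G := {g : G | χ g g = 1}
    (∀ g ∈ Q, ∀ k ∈ Q, op g (op g k) = k⁻¹ * g⁻¹ * k * g * k⁻¹ * g * k) ∧
    ((∀ g ∈ Q, ∀ k ∈ Q, op g (op g k) = g) ↔
      (∀ g ∈ Q, ∀ k ∈ Q, g * (k⁻¹ * g * k) = (k⁻¹ * g * k) * g)) := by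
  intro χ op Q
  have h1 : κ (1 : G) = 0 := by
    have := hκ 1 1; simpa using this
  have hinv : ∀ x : G, κ x⁻¹ = -κ x := by
    intro x
    have h := hκ x⁻¹ x
    simp [h1] at h
    exact eq_neg_of_add_eq_zero_left h.symm
  have key : ∀ g ∈ Q, ∀ k ∈ Q, op g (op g k) = k⁻¹ * g⁻¹ * k * g * k⁻¹ * g * k := by
    intro g hg k hk
    have hg' : β (κ g) (κ g) = 1 := hg
    have hκm : κ (op g k) = κ g := by
      simp only [op, χ, hκ, hinv, hker]
      abel
    show (op g k)⁻¹ * g * (op g k) * β (κ g) (κ (op g k)) = _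
    rw [hκm, hg', mul_one]
    show (k⁻¹ * g * k * β (κ g) (κ k))⁻¹ * g * (k⁻¹ * g * k * β (κ g) (κ k)) = _
    set b := β (κ g) (κ k) with hb
    have hbc : ∀ x : G, b * x = x * b := hcenter _ _
    calc (k⁻¹ * g * k * b)⁻¹ * g * (k⁻¹ * g * k * b)
        = b⁻¹ * ((k⁻¹ * g * k)⁻¹ * g * (k⁻¹ * g * k)) * b := by group
      _ = (k⁻¹ * g * k)⁻¹ * g * (k⁻¹ * g * k) := by rw [mul_assoc, ← hbc]; group
      _ = k⁻¹ * g⁻¹ * k * g * k⁻¹ * g * k := by group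
  refine ⟨key, ?_, ?_⟩
  · intro H g hg k hk
    have h := H g hg k hk
    rw [key g hg k hk] at h
    calc g * (k⁻¹ * g * k)
        = (k⁻¹ * g * k) * (k⁻¹ * g⁻¹ * k * g * k⁻¹ * g * k) := by group
      _ = (k⁻¹ * g * k) * g := by rw [h]
  · intro H g hg k hk
    rw [key g hg k hk]
    calc k⁻¹ * g⁻¹ * k * g * k⁻¹ * g * k
        = k⁻¹ * g⁻¹ * k * (g * (k⁻¹ * g * k)) := by group
      _ = k⁻¹ * g⁻¹ * k * ((k⁻¹ * g * k) * g) := by rw [H g hg k hk]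
      _ = g := by group
end

section
/- Let G be a group in which the conjugation quandle is quasi-trivial, i.e., g commutes with k⁻¹ g k for all g, k ∈ G. Then for the rack h ▷ g = g⁻¹ h g · χ(h,g) built from any admissible χ, the idempotent quandle Q(G) = {g : χ(g,g) = 1} is quasi-trivial: g ▷ (g ▷ k) = g for all g, k ∈ Q(G). -/
/-! The rack operation `g ▷ k = k⁻¹ g k · β(κ g, κ k)` preserves `κ`, since `κ` kills both the
conjugation and the central factor. Hence `χ(g, g ▷ k) = χ(g, g) = 1`, and `g ▷ (g ▷ k)` is the
conjugate of `g` by `(k⁻¹ g k) · z` with `z` central; quasi-triviality of conjugation says that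
`g` commutes with `k⁻¹ g k`, so this conjugate is `g` itself. -/

section

variable {G A : Type*} [Group G] [AddCommGroup A]

lemma map_conj_mul_eq_of_map_mul {κ : G → A} (hκ : ∀ g h : G, κ (g * h) = κ g + κ h)
    {z : G} (hz : κ z = 0) (g k : G) : κ (k⁻¹ * g * k * z) = κ g := by
  have hκ_one : κ 1 = 0 := by
    simpa using hκ 1 1
  have hκ_inv : κ k⁻¹ + κ k = 0 := by
    rw [← hκ, inv_mul_cancel, hκ_one]
  calc κ (k⁻¹ * g * k * z) = (κ k⁻¹ + κ k) + κ g + κ z := by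
        simp only [hκ]; abel
    _ = κ g := by rw [hκ_inv, hz, zero_add, add_zero]

lemma conj_conj_mul_central_eq {g k z : G} (hcomm : Commute g (k⁻¹ * g * k))
    (hz : ∀ x : G, z * x = x * z) :
    (k⁻¹ * g * k * z)⁻¹ * g * (k⁻¹ * g * k * z) = g := by
  calc (k⁻¹ * g * k * z)⁻¹ * g * (k⁻¹ * g * k * z)
      = z⁻¹ * ((k⁻¹ * g * k)⁻¹ * g * (k⁻¹ * g * k)) * z := by group
    _ = z⁻¹ * g * z := by rw [hcomm.symm.inv_mul_cancel]
    _ = g := by rw [mul_assoc, ← hz g, inv_mul_cancel_left]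

end

theorem quasi_trivial_of_conj_quasi_trivial_general {G A : Type*} [Group G] [AddCommGroup A]
    (κ : G → A) (hκ : ∀ g h : G, κ (g * h) = κ g + κ h)
    (β : A → A → G)
    (hcenter : ∀ a b : A, ∀ g : G, β a b * g = g * β a b)
    (hker : ∀ a b : A, κ (β a b) = 0)
    (hconj : ∀ g k : G, g * (k⁻¹ * g * k) = (k⁻¹ * g * k) * g) :
    let χ : G → G → G := fun h g => β (κ h) (κ g)
    let op : G → G → G := fun h g => g⁻¹ * h * g * χ h g
    ∀ g k : G, χ g g = 1 → χ k k = 1 → op g (op g k) = g := by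
  intro χ op g k hg _
  have hκ_op : κ (op g k) = κ g := map_conj_mul_eq_of_map_mul hκ (hker _ _) g k
  show (op g k)⁻¹ * g * op g k * β (κ g) (κ (op g k)) = g
  rw [hκ_op, show β (κ g) (κ g) = 1 from hg, mul_one]
  exact conj_conj_mul_central_eq (hconj g k) (hcenter (κ g) (κ k))

/-- If the conjugation quandle of `G` is quasi-trivial (every `g` commutes with `k⁻¹ g k`),
then the idempotent quandle `Q(G) = {g : χ(g,g) = 1}` of the rack
`h ▷ g = g⁻¹ h g · χ(h,g)` is quasi-trivial. -/
theorem quasi_trivial_of_conj_quasi_trivial {G A : Type*} [Group G] [AddCommGroup A]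
    (κ : G → A) (hκ : ∀ g h : G, κ (g * h) = κ g + κ h)
    (β : A → A → G)
    (hcenter : ∀ a b : A, ∀ g : G, β a b * g = g * β a b)
    (hsymm : ∀ a b : A, β a b = β b a)
    (hadd : ∀ a a' b : A, β (a + a') b = β a b * β a' b)
    (hker : ∀ a b : A, κ (β a b) = 0)
    (hconj : ∀ g k : G, g * (k⁻¹ * g * k) = (k⁻¹ * g * k) * g) :
    let χ : G → G → G := fun h g => β (κ h) (κ g)
    let op : G → G → G := fun h g => g⁻¹ * h * g * χ h g
    ∀ g k : G, χ g g = 1 → χ k k = 1 → op g (op g k) = g :=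
  quasi_trivial_of_conj_quasi_trivial_general κ hκ β hcenter hker hconj
end

section
/- On the Heisenberg group G = {upper triangular 3×3 real matrices M(x,y,z) with 1's on the diagonal, entries y (position 1,2), x (position 1,3), z (position 2,3)}, define M(x,y,z) ▷ M(a,b,c) = M(x + yb + 2cy + zc, y, z). Then (G, ▷) is a pointed Lie rack: right translations are bijections, right self-distributivity holds, and the identity matrix is a distinguished element with X ▷ I = X and I ▷ X = I. -/
private lemma hM01 (x y z : ℝ) : (!![1, y, x; 0, 1, z; 0, 0, 1] : Matrix (Fin 3) (Fin 3) ℝ) 0 1 = y := by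
  simp
private lemma hM02 (x y z : ℝ) : (!![1, y, x; 0, 1, z; 0, 0, 1] : Matrix (Fin 3) (Fin 3) ℝ) 0 2 = x := by
  simp
private lemma hM12 (x y z : ℝ) : (!![1, y, x; 0, 1, z; 0, 0, 1] : Matrix (Fin 3) (Fin 3) ℝ) 1 2 = z := by
  simp

private lemma hMinj {x y z x' y' z' : ℝ}
    (h : (!![1, y, x; 0, 1, z; 0, 0, 1] : Matrix (Fin 3) (Fin 3) ℝ) = !![1, y', x'; 0, 1, z'; 0, 0, 1]) :
    x = x' ∧ y = y' ∧ z = z' := by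
  refine ⟨?_, ?_, ?_⟩
  · have := congrFun (congrFun h 0) 2; simpa using this
  · have := congrFun (congrFun h 0) 1; simpa using this
  · have := congrFun (congrFun h 1) 2; simpa [Matrix.vecHead, Matrix.vecTail] using this

private lemma hMone : (!![1, 0, 0; 0, 1, 0; 0, 0, 1] : Matrix (Fin 3) (Fin 3) ℝ) = 1 := by
  ext i j
  fin_cases i <;> fin_cases j <;> simp [Matrix.one_apply, Matrix.vecHead, Matrix.vecTail]

/-- On the Heisenberg group of upper triangular real matrices `M(x,y,z)`, the operation
`M(x,y,z) ▷ M(a,b,c) = M(x + yb + 2cy + zc, y, z)` defines a pointed Lie rack structure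
with distinguished element the identity matrix. -/
theorem heisenberg_lie_rack :
    let M : ℝ → ℝ → ℝ → Matrix (Fin 3) (Fin 3) ℝ :=
      fun x y z => !![1, y, x; 0, 1, z; 0, 0, 1]
    let G : Set (Matrix (Fin 3) (Fin 3) ℝ) := {A | ∃ x y z : ℝ, A = M x y z}
    let op : Matrix (Fin 3) (Fin 3) ℝ → Matrix (Fin 3) (Fin 3) ℝ →
        Matrix (Fin 3) (Fin 3) ℝ :=
      fun A B =>
        M (A 0 2 + A 0 1 * B 0 1 + 2 * B 1 2 * A 0 1 + A 1 2 * B 1 2) (A 0 1) (A 1 2)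
    (∀ A ∈ G, ∀ B ∈ G, op A B ∈ G) ∧
    (∀ B ∈ G, Set.BijOn (fun A => op A B) G G) ∧
    (∀ A ∈ G, ∀ B ∈ G, ∀ C ∈ G, op (op A B) C = op (op A C) (op B C)) ∧
    (∀ A ∈ G, op A 1 = A ∧ op 1 A = 1) := by
  intro M G op
  have hop : ∀ x y z a b c : ℝ, op (M x y z) (M a b c)
      = M (x + y * b + 2 * c * y + z * c) y z := by
    intro x y z a b c
    simp only [op, M, hM01, hM02, hM12]
  refine ⟨?_, ?_, ?_, ?_⟩
  · rintro A ⟨x, y, z, rfl⟩ B ⟨a, b, c, rfl⟩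
    exact ⟨_, _, _, hop x y z a b c⟩
  · rintro B ⟨a, b, c, rfl⟩
    refine ⟨?_, ?_, ?_⟩
    · rintro A ⟨x, y, z, rfl⟩
      exact ⟨_, _, _, hop x y z a b c⟩
    · rintro A ⟨x, y, z, rfl⟩ A' ⟨x', y', z', rfl⟩ h
      simp only [hop] at h
      obtain ⟨h1, h2, h3⟩ := hMinj h
      subst h2; subst h3
      have : x = x' := by linarith
      rw [this]
    · rintro A ⟨x, y, z, rfl⟩
      refine ⟨M (x - (y * b + 2 * c * y + z * c)) y z, ⟨_, _, _, rfl⟩, ?_⟩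
      simp only [hop]
      ring_nf
  · rintro A ⟨x, y, z, rfl⟩ B ⟨a, b, c, rfl⟩ C ⟨u, v, w, rfl⟩
    simp only [hop]
    ring_nf
  · rintro A ⟨x, y, z, rfl⟩
    constructor
    · rw [show (1 : Matrix (Fin 3) (Fin 3) ℝ) = M 0 0 0 from (hMone).symm, hop]
      ring_nf
    · rw [show (1 : Matrix (Fin 3) (Fin 3) ℝ) = M 0 0 0 from (hMone).symm, hop]
      ring_nf
end

section
/- Consider the set Q = {M(a,b,c) : a,b,c ∈ ℝ, b = −c} of Heisenberg matrices with the operation M(x,y,z) ▷ M(a,b,c) = M(x + yb + 2cy + zc, y, z). Then (Q, ▷) is a quandle, and it is quasi-trivial: p ▷ (p ▷ q) = p for all p, q ∈ Q. -/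
/-- The set `Q = {M(a,b,c) : b = -c}` of Heisenberg matrices, parametrized by triples
`(a,b,c) ∈ ℝ³` with `b = -c`, equipped with the operation
`(x,y,z) ▷ (a,b,c) = (x + yb + 2cy + zc, y, z)`, is a quandle, and it is quasi-trivial:
`p ▷ (p ▷ q) = p` for all `p, q ∈ Q`. -/
theorem heisenberg_quandle_quasi_trivial :
    let op : ℝ × ℝ × ℝ → ℝ × ℝ × ℝ → ℝ × ℝ × ℝ :=
      fun p q =>
        (p.1 + p.2.1 * q.2.1 + 2 * q.2.2 * p.2.1 + p.2.2 * q.2.2, p.2.1, p.2.2)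
    let Q : Set (ℝ × ℝ × ℝ) := {p | p.2.1 = -p.2.2}
    (∀ p ∈ Q, ∀ q ∈ Q, op p q ∈ Q) ∧
    (∀ p ∈ Q, op p p = p) ∧
    (∀ p ∈ Q, ∀ q ∈ Q, ∀ r ∈ Q, op (op p q) r = op (op p r) (op q r)) ∧
    (∀ q ∈ Q, Set.BijOn (fun p => op p q) Q Q) ∧
    (∀ p ∈ Q, ∀ q ∈ Q, op p (op p q) = p) := by
  intro op Q
  refine ⟨fun p hp q hq => hp, ?_, ?_, ?_, ?_⟩
  · rintro ⟨x, y, z⟩ hp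
    simp only [Q, Set.mem_setOf_eq] at hp
    simp only [op, Prod.mk.injEq]
    subst hp
    exact ⟨by ring, trivial⟩
  · rintro ⟨x, y, z⟩ hp ⟨a, b, c⟩ hq ⟨u, v, w⟩ hr
    simp only [Q, Set.mem_setOf_eq] at hp hq hr
    simp only [op, Prod.mk.injEq]
    subst hp hq hr; exact ⟨by ring, trivial⟩
  · rintro ⟨a, b, c⟩ hq
    simp only [Q, Set.mem_setOf_eq] at hq
    refine ⟨fun p hp => hp, ?_, ?_⟩
    · rintro ⟨x, y, z⟩ hp ⟨x', y', z'⟩ hp' h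
      simp only [op, Prod.mk.injEq] at h
      obtain ⟨h1, h2, h3⟩ := h
      subst h2 h3
      simp only [Prod.mk.injEq]
      exact ⟨by linarith, trivial⟩
    · rintro ⟨x, y, z⟩ hp
      refine ⟨(x - y * b - 2 * c * y - z * c, y, z), hp, ?_⟩
      simp only [op, Prod.mk.injEq]
      exact ⟨by ring, trivial⟩
  · rintro ⟨x, y, z⟩ hp ⟨a, b, c⟩ hq
    simp only [Q, Set.mem_setOf_eq] at hp hq
    simp only [op, Prod.mk.injEq]
    subst hp hq
    exact ⟨by ring, trivial⟩
end

section
/- On ℝ³ define (x,y,z) ▷ (a,b,c) = (γbz + γcy − bz + cy + x, y, z) with γ ≠ 0 a fixed real (the rack from g³₍3,1₎⁴). Then this operation is a rack on ℝ³, and its idempotent set Q = {(a,b,c) : bc = 0} is a quandle satisfying x ▷ (y ▷ z) = x ▷ y for all x, y, z ∈ Q; hence Q is medial. -/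
/-- The rack on `ℝ³` from `𝔤₃,₁⁴`: `(x,y,z) ▷ (a,b,c) = (γbz + γcy - bz + cy + x, y, z)`
with `γ ≠ 0`. Its idempotent set is `Q = {(a,b,c) : bc = 0}` (for a point `(x,y,z)` the
idempotency condition reads `yz = 0`), and on `Q` the identity `x ▷ (y ▷ z) = x ▷ y` holds,
hence `Q` is a medial quandle. -/
theorem g31_gamma_rack_medial (γ : ℝ) (hγ : γ ≠ 0) :
    let op : ℝ × ℝ × ℝ → ℝ × ℝ × ℝ → ℝ × ℝ × ℝ :=
      fun p q =>
        (γ * q.2.1 * p.2.2 + γ * q.2.2 * p.2.1 - q.2.1 * p.2.2 + q.2.2 * p.2.1 + p.1,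
          p.2.1, p.2.2)
    let Q : Set (ℝ × ℝ × ℝ) := {p | p.2.1 * p.2.2 = 0}
    (∀ q : ℝ × ℝ × ℝ, Function.Bijective (fun p => op p q)) ∧
    (∀ p q r : ℝ × ℝ × ℝ, op (op p q) r = op (op p r) (op q r)) ∧
    (∀ p : ℝ × ℝ × ℝ, op p p = p ↔ p ∈ Q) ∧
    (∀ p ∈ Q, ∀ q ∈ Q, ∀ r ∈ Q, op p (op q r) = op p q) ∧
    (∀ p ∈ Q, ∀ q ∈ Q, ∀ r ∈ Q, ∀ s ∈ Q,
      op (op p q) (op r s) = op (op p r) (op q s)) := by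
  intro op Q
  refine ⟨?_, ?_, ?_, ?_, ?_⟩
  · intro q
    constructor
    · rintro ⟨a, b, c⟩ ⟨a', b', c'⟩ h
      simp only [op, Prod.mk.injEq] at h
      obtain ⟨h1, h2, h3⟩ := h
      subst h2; subst h3
      have : a = a' := by linarith
      simp [this]
    · rintro ⟨a, b, c⟩
      refine ⟨(a - (γ * q.2.1 * c + γ * q.2.2 * b - q.2.1 * c + q.2.2 * b), b, c), ?_⟩
      simp only [op]
      ring_nf
  · rintro p q r
    simp only [op, Prod.mk.injEq, and_true]
    ring
  · rintro ⟨a, b, c⟩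
    simp only [op, Q, Set.mem_setOf_eq, Prod.mk.injEq, and_true]
    constructor
    · intro h
      have : 2 * γ * (b * c) = 0 := by linarith [h]
      rcases mul_eq_zero.1 this with h' | h'
      · rcases mul_eq_zero.1 h' with h'' | h''
        · norm_num at h''
        · exact absurd h'' hγ
      · exact h'
    · intro h
      linear_combination (γ - 1) * h + (γ + 1) * ((mul_comm c b).trans h)
  · rintro p _ q _ r _
    simp only [op]
  · rintro p _ q _ r _ s _
    simp only [op, Prod.mk.injEq, and_true]
    ring
end
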